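/- For d ≥ 2 and q ≥ 2, the maximum possible moment of a codeword of length n is strictly less than twice w_{n+1}: for every x ∈ {0,…,q−1}^n, M(x) = ∑_{i=1}^{n} w_i·x_i < 2·w_{n+1}(q,d). -/
import Mathlib


/-- Weight sequence: `W p d i` = w_i(q,d) where p = q-1; w_i = 0 for i ≤ 0 (encoded by
ℕ truncated subtraction together with `W p d 0 = 0`), and w_i = 1 + p·∑_{j=1}^d w_{i-j}
for i ≥ 1. -/
def W (p d : ℕ) : ℕ → ℕ
  | 0 => 0
  | (i+1) => 1 + p * ∑ j ∈ Finset.range d, W p d (i - j)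
decreasing_by exact Nat.lt_succ_of_le (Nat.sub_le i j)

/-- Moment of a word (1-indexed): M(x) = ∑_{i=1}^{n} w_i x_i. -/
def moment (w : ℕ → ℕ) (x : List ℕ) : ℕ :=
  ∑ i ∈ Finset.range x.length, w (i + 1) * x.getD i 0

lemma W_succ (p d n : ℕ) : W p d (n+1) = 1 + p * ∑ j ∈ Finset.range d, W p d (n - j) := by
  rw [W]

lemma W_mono (p d : ℕ) : Monotone (W p d) := by
  apply monotone_nat_of_le_succ
  intro n
  induction n using Nat.strong_induction_on with
  | _ n ih =>
    match n with
    | 0 => simp [W]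
    | (m+1) =>
      rw [W_succ, W_succ]
      gcongr with j hj
      rcases le_or_gt j m with h | h
      · have : m + 1 - j = (m - j) + 1 := by omega
        rw [this]
        exact ih (m - j) (by omega)
      · have h1 : m - j = 0 := by omega
        rw [h1]; simp [W]

lemma sumA (p d : ℕ) (n : ℕ) (hd : 1 ≤ d) :
    ∑ i ∈ Finset.range n, W p d (i+1)
      = (∑ i ∈ Finset.range (n-d), W p d (i+1)) + ∑ j ∈ Finset.range d, W p d (n - j) := by
  rcases le_or_gt d n with h | h
  · have hn : n = (n - d) + d := by omega
    nth_rewrite 1 [hn]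
    rw [Finset.sum_range_add]
    congr 1
    rw [← Finset.sum_range_reflect]
    apply Finset.sum_congr rfl
    intro j hj
    simp only [Finset.mem_range] at hj
    congr 1
    omega
  · have h0 : n - d = 0 := by omega
    rw [h0]
    simp only [Finset.range_zero, Finset.sum_empty, zero_add]
    have heq : ∑ j ∈ Finset.range d, W p d (n - j)
        = ∑ j ∈ Finset.range n, W p d (n - j) := by
      rw [← Finset.sum_subset (Finset.range_subset_range.2 h.le)]
      intro j hj hj2
      simp only [Finset.mem_range, not_lt] at hj hj2
      have : n - j = 0 := by omega
      rw [this, W]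
    rw [heq, ← Finset.sum_range_reflect (fun i => W p d (i+1)) n]
    apply Finset.sum_congr rfl
    intro j hj
    simp only [Finset.mem_range] at hj
    congr 1
    omega

lemma key (p d : ℕ) (hp : 1 ≤ p) (hd : 2 ≤ d) :
    ∀ n, p * (∑ i ∈ Finset.range n, W p d (i+1)) + 2 ≤ 2 * W p d (n+1) := by
  intro n
  induction n using Nat.strong_induction_on with
  | _ n ih =>
    rw [W_succ, sumA p d n (by omega), Nat.mul_add]
    rcases le_or_gt d n with h | h
    · have hih := ih (n - d) (by omega)
      have hkey : 2 * W p d (n - d + 1) ≤ 2 + p * ∑ j ∈ Finset.range d, W p d (n - j) := by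
        obtain ⟨k, rfl⟩ : ∃ k, d = k + 2 := ⟨d - 2, by omega⟩
        rw [Finset.sum_range_succ, Finset.sum_range_succ]
        have m1 : W p (k+2) (n - (k+1)) ≥ W p (k+2) (n - (k+1)) := le_refl _
        have m2 : W p (k+2) (n - (k+1)) ≤ W p (k+2) (n - k) := W_mono _ _ (by omega)
        have : n - (k+2) + 1 = n - (k+1) := by omega
        rw [this]
        calc 2 * W p (k+2) (n - (k+1))
            = W p (k+2) (n - (k+1)) + W p (k+2) (n - (k+1)) := by ring
          _ ≤ W p (k+2) (n - k) + W p (k+2) (n - (k+1)) := by gcongr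
          _ ≤ (∑ j ∈ Finset.range k, W p (k+2) (n - j)) + W p (k+2) (n - k)
              + W p (k+2) (n - (k+1)) := by omega
          _ ≤ p * ((∑ j ∈ Finset.range k, W p (k+2) (n - j)) + W p (k+2) (n - k)
              + W p (k+2) (n - (k+1))) := Nat.le_mul_of_pos_left _ hp
          _ ≤ 2 + p * ((∑ j ∈ Finset.range k, W p (k+2) (n - j) + W p (k+2) (n - k))
              + W p (k+2) (n - (k+1))) := by rw [add_assoc]; omega
      omega
    · have h0 : n - d = 0 := by omega
      rw [h0]
      simp only [Finset.range_zero, Finset.sum_empty, Nat.mul_zero, zero_add]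
      omega

theorem moment_lt_two_mul_weight (q d : ℕ) (hq : 2 ≤ q) (hd : 2 ≤ d) (n : ℕ)
    (x : List ℕ) (hlen : x.length = n) (hx : ∀ a ∈ x, a < q) :
    moment (W (q - 1) d) x < 2 * W (q - 1) d (n + 1) := by
  set p := q - 1 with hp
  have hp1 : 1 ≤ p := by omega
  have h1 : moment (W p d) x ≤ p * ∑ i ∈ Finset.range n, W p d (i+1) := by
    rw [moment, hlen, Finset.mul_sum]
    apply Finset.sum_le_sum
    intro i hi
    simp only [Finset.mem_range] at hi
    have hmem : x.getD i 0 ∈ x := by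
      rw [List.getD_eq_getElem x 0 (by omega)]
      exact List.getElem_mem _
    have := hx _ hmem
    calc W p d (i+1) * x.getD i 0 ≤ W p d (i+1) * p := by
          apply Nat.mul_le_mul_left; omega
      _ = p * W p d (i+1) := by ring
  have h2 := key p d hp1 hd n
  omega
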